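/- arXiv:2405.20799 — 2 statements merged into one kernel-verified Lean document; each statement's English description precedes it below -/
import Mathlib

section
/- Chen's relation for first and second signature levels: for a C¹ path X̂: [a,c] → ℝᵈ and a < b < c, the level-2 signature satisfies S²(X̂)_{a,c} = S²(X̂)_{a,b} + S¹(X̂)_{a,b} ⊗ S¹(X̂)_{b,c} + S²(X̂)_{b,c}. -/
open MeasureTheory

/-- Coordinate of the path signature: for a multi-index `I = (i₁, …, i_p)`,
`sigCoord X I s t = ∫_{s<u₁<⋯<u_p<t} Ẋ^{i₁}(u₁)⋯Ẋ^{i_p}(u_p) du₁⋯du_p`,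
written recursively by integrating out the first variable. -/
noncomputable def sigCoord {d : ℕ} (X : ℝ → Fin d → ℝ) : List (Fin d) → ℝ → ℝ → ℝ
  | [], _, _ => 1
  | i :: I, s, t => ∫ u in s..t, deriv (fun r => X r i) u * sigCoord X I u t

lemma sig_nil {d : ℕ} (X : ℝ → Fin d → ℝ) (s t : ℝ) : sigCoord X [] s t = 1 := rfl

lemma sig_one {d : ℕ} (X : ℝ → Fin d → ℝ) (j : Fin d)
    (hX : ContDiff ℝ 1 (fun t => X t j)) (s t : ℝ) :
    sigCoord X [j] s t = X t j - X s j := by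
  have hderiv : Continuous (deriv (fun r => X r j)) :=
    (hX.continuous_deriv le_rfl)
  have : sigCoord X [j] s t = ∫ u in s..t, deriv (fun r => X r j) u := by
    simp [sigCoord]
  rw [this]
  exact intervalIntegral.integral_deriv_eq_sub
    (fun x _ => (hX.differentiable one_ne_zero).differentiableAt)
    (hderiv.intervalIntegrable s t)

/-- Chen's relation for the first and second signature levels, coordinatewise. -/
theorem chen_level_two {d : ℕ} (a b c : ℝ) (hab : a < b) (hbc : b < c)
    (X : ℝ → Fin d → ℝ) (hX : ∀ i, ContDiff ℝ 1 (fun t => X t i)) :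
    ∀ i j : Fin d,
      sigCoord X [i, j] a c
        = sigCoord X [i, j] a b + sigCoord X [i] a b * sigCoord X [j] b c
          + sigCoord X [i, j] b c := by
  intro i j
  have hfi : Continuous (deriv (fun r => X r i)) := ((hX i).continuous_deriv le_rfl)
  have hXj : Continuous (fun r => X r j) := (hX j).continuous
  have htwo : ∀ s t : ℝ, sigCoord X [i, j] s t
      = ∫ u in s..t, deriv (fun r => X r i) u * (X t j - X u j) := by
    intro s t
    show (∫ u in s..t, deriv (fun r => X r i) u * sigCoord X [j] u t) = _
    congr 1
    ext u
    rw [sig_one X j (hX j)]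
  have hcont : ∀ t : ℝ, Continuous (fun u => deriv (fun r => X r i) u * (X t j - X u j)) := by
    intro t
    exact hfi.mul (continuous_const.sub hXj)
  rw [htwo a c, htwo a b, htwo b c, sig_one X i (hX i), sig_one X j (hX j)]
  rw [← intervalIntegral.integral_add_adjacent_intervals
      ((hcont c).intervalIntegrable a b) ((hcont c).intervalIntegrable b c)]
  have hsplit : (∫ u in a..b, deriv (fun r => X r i) u * (X c j - X u j))
      = (∫ u in a..b, deriv (fun r => X r i) u * (X b j - X u j))
        + (X b i - X a i) * (X c j - X b j) := by
    have h1 : (∫ u in a..b, deriv (fun r => X r i) u * (X c j - X u j))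
        = (∫ u in a..b, (deriv (fun r => X r i) u * (X b j - X u j)
            + deriv (fun r => X r i) u * (X c j - X b j))) := by
      congr 1; ext u; ring
    rw [h1, intervalIntegral.integral_add (g := fun u => deriv (fun r => X r i) u * (X c j - X b j)) ((hcont b).intervalIntegrable a b)
        ((hfi.mul continuous_const).intervalIntegrable a b),
      intervalIntegral.integral_mul_const,
      intervalIntegral.integral_deriv_eq_sub
        (fun x _ => ((hX i).differentiable one_ne_zero).differentiableAt)
        (hfi.intervalIntegrable a b)]
  rw [hsplit]
end

section
/- Chen's relation at level n: for a C¹ path X̂: [a,c] → ℝᵈ and a < b < c, the n-th level signature satisfies S^n(X̂)_{a,c} = Σ_{j=0}^{n} S^j(X̂)_{a,b} ⊗ S^{n−j}(X̂)_{b,c}, where S⁰ := 1 (the scalar unit). -/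
open MeasureTheory

lemma sig_cont {d : ℕ} (X : ℝ → Fin d → ℝ) (hX : ∀ i, ContDiff ℝ 1 (fun t => X t i)) :
    ∀ (I : List (Fin d)) (t : ℝ), Continuous (fun u => sigCoord X I u t) := by
  intro I
  induction I with
  | nil => intro t; simpa [sigCoord] using continuous_const
  | cons i I ih =>
    intro t
    have hf : Continuous (deriv (fun r => X r i)) := (hX i).continuous_deriv le_rfl
    have hg : Continuous (fun v => deriv (fun r => X r i) v * sigCoord X I v t) :=
      hf.mul (ih t)
    have hcont : Continuous fun u => ∫ v in t..u, deriv (fun r => X r i) v * sigCoord X I v t :=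
      intervalIntegral.continuous_primitive (fun a b => hg.intervalIntegrable a b) t
    have heq : (fun u => sigCoord X (i :: I) u t)
        = fun u => -(∫ v in t..u, deriv (fun r => X r i) v * sigCoord X I v t) := by
      funext u
      rw [sigCoord, intervalIntegral.integral_symm]
    rw [heq]
    exact hcont.neg

/-- Chen's relation at every level: the signature over [a,c] is the sum of tensor
products of the signatures over [a,b] and [b,c], coordinatewise. -/
theorem chen_relation {d : ℕ} (a b c : ℝ) (hab : a < b) (hbc : b < c)
    (X : ℝ → Fin d → ℝ) (hX : ∀ i, ContDiff ℝ 1 (fun t => X t i)) :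
    ∀ I : List (Fin d),
      sigCoord X I a c
        = ∑ j ∈ Finset.range (I.length + 1),
            sigCoord X (I.take j) a b * sigCoord X (I.drop j) b c := by
  have key : ∀ I : List (Fin d), ∀ a : ℝ,
      sigCoord X I a c = ∑ j ∈ Finset.range (I.length + 1),
        sigCoord X (I.take j) a b * sigCoord X (I.drop j) b c := by
    intro I
    induction I with
    | nil => intro a; simp [sigCoord]
    | cons i I ih =>
      intro a
      have hS := sig_cont X hX
      have hf : Continuous (deriv (fun r => X r i)) := (hX i).continuous_deriv le_rfl
      have hsplit : sigCoord X (i :: I) a c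
          = (∫ u in a..b, deriv (fun r => X r i) u * sigCoord X I u c)
            + ∫ u in b..c, deriv (fun r => X r i) u * sigCoord X I u c := by
        rw [sigCoord]
        exact (intervalIntegral.integral_add_adjacent_intervals
          ((hf.mul (hS I c)).intervalIntegrable a b)
          ((hf.mul (hS I c)).intervalIntegrable b c)).symm
      have h2 : (∫ u in b..c, deriv (fun r => X r i) u * sigCoord X I u c)
          = sigCoord X (i :: I) b c := rfl
      have hpt : ∀ u : ℝ, deriv (fun r => X r i) u * sigCoord X I u c
          = ∑ j ∈ Finset.range (I.length + 1),
              (deriv (fun r => X r i) u * sigCoord X (I.take j) u b)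
                * sigCoord X (I.drop j) b c := by
        intro u
        rw [ih u, Finset.mul_sum]
        exact Finset.sum_congr rfl (fun j _ => by ring)
      have h1 : (∫ u in a..b, deriv (fun r => X r i) u * sigCoord X I u c)
          = ∑ j ∈ Finset.range (I.length + 1),
              sigCoord X (i :: I.take j) a b * sigCoord X (I.drop j) b c := by
        calc (∫ u in a..b, deriv (fun r => X r i) u * sigCoord X I u c)
            = ∫ u in a..b, ∑ j ∈ Finset.range (I.length + 1),
                (deriv (fun r => X r i) u * sigCoord X (I.take j) u b)
                  * sigCoord X (I.drop j) b c := by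
              simp only [hpt]
          _ = ∑ j ∈ Finset.range (I.length + 1),
                ∫ u in a..b, (deriv (fun r => X r i) u * sigCoord X (I.take j) u b)
                  * sigCoord X (I.drop j) b c := by
              apply intervalIntegral.integral_finset_sum
              intro j _
              exact (((hf.mul (hS (I.take j) b)).mul continuous_const).intervalIntegrable a b)
          _ = ∑ j ∈ Finset.range (I.length + 1),
                (∫ u in a..b, deriv (fun r => X r i) u * sigCoord X (I.take j) u b)
                  * sigCoord X (I.drop j) b c := by
              refine Finset.sum_congr rfl (fun j _ => ?_)
              exact intervalIntegral.integral_mul_const _ _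
          _ = ∑ j ∈ Finset.range (I.length + 1),
                sigCoord X (i :: I.take j) a b * sigCoord X (I.drop j) b c := rfl
      rw [hsplit, h1, h2]
      have : (i :: I).length + 1 = I.length + 1 + 1 := rfl
      conv_rhs => rw [this, Finset.sum_range_succ']
      simp only [List.take_succ_cons, List.drop_succ_cons, List.take_zero, List.drop_zero]
      rw [show sigCoord X [] a b = 1 from rfl, one_mul, add_comm]
  exact fun I => key I a
end
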